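/- (Pairing bound from the proof of Theorem 5.) Let n ≥ 2 be an integer and let g : {0,1,…,n} → {A,B,C} satisfy: whenever 0 ≤ j < k ≤ n with g(j) = C and g(k) = C, there exists i with j < i < k and g(i) = A. Let n_A, n_B, n_C denote the numbers of indices receiving grades A, B, C respectively, and let p_A, p_B, p_C ∈ [0,1] be reals. Then p_A^{n_A} · p_B^{n_B} · p_C^{n_C} ≤ (max{p_A², p_B², p_C·p_A})^{n/2 − 1}, where the right-hand side uses the real power with exponent n/2 − 1. -/
import Mathlib

/-- The three grades A, B, C from the proofs of Theorems 4 and 5. -/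
inductive Grade : Type
  | A | B | C
deriving DecidableEq

-- aux: p^m ≤ M^(m/2) when p ∈ [0,1], p² ≤ M
lemma aux_pow_half (p M : ℝ) (hp0 : 0 ≤ p) (hp1 : p ≤ 1) (hM : p ^ 2 ≤ M) (m : ℕ) :
    p ^ m ≤ M ^ (m / 2) := by
  calc p ^ m ≤ p ^ (2 * (m / 2)) := pow_le_pow_of_le_one hp0 hp1 (by omega)
    _ = (p ^ 2) ^ (m / 2) := by rw [pow_mul]
    _ ≤ M ^ (m / 2) := pow_le_pow_left₀ (sq_nonneg p) hM _

-- combinatorial lemma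
lemma aux_comb (n : ℕ) (g : Fin (n + 1) → Grade)
    (hCC : ∀ j k : Fin (n + 1), j < k → g j = Grade.C → g k = Grade.C →
      ∃ i : Fin (n + 1), j < i ∧ i < k ∧ g i = Grade.A) :
    (Finset.univ.filter (fun i => g i = Grade.C)).card ≤
      (Finset.univ.filter (fun i => g i = Grade.A)).card + 1 := by
  classical
  set S := Finset.univ.filter (fun i => g i = Grade.C) with hS
  set T := Finset.univ.filter (fun i => g i = Grade.A) with hT
  by_cases hS1 : S.card ≤ 1
  · omega
  have hSne : S.Nonempty := Finset.card_pos.mp (by omega)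
  set m := S.max' hSne with hm
  have spec : ∀ j ∈ S.erase m, ∃ i : Fin (n+1), j < i ∧ g i = Grade.A ∧
      ∀ s ∈ S, j < s → i < s := by
    intro j hj
    have hjS : j ∈ S := Finset.mem_of_mem_erase hj
    have hjm : j < m := lt_of_le_of_ne (S.le_max' j hjS) (Finset.ne_of_mem_erase hj)
    have hne : (S.filter (fun s => j < s)).Nonempty :=
      ⟨m, Finset.mem_filter.mpr ⟨S.max'_mem hSne, hjm⟩⟩
    set k := (S.filter (fun s => j < s)).min' hne with hk
    have hkmem := (S.filter (fun s => j < s)).min'_mem hne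
    rw [Finset.mem_filter] at hkmem
    have hgj : g j = Grade.C := (Finset.mem_filter.mp hjS).2
    have hgk : g k = Grade.C := (Finset.mem_filter.mp hkmem.1).2
    obtain ⟨i, hji, hik, hgi⟩ := hCC j k hkmem.2 hgj hgk
    refine ⟨i, hji, hgi, ?_⟩
    intro s hsS hjs
    have : k ≤ s := Finset.min'_le _ s (Finset.mem_filter.mpr ⟨hsS, hjs⟩)
    exact lt_of_lt_of_le hik this
  set f : Fin (n+1) → Fin (n+1) := fun j =>
    if h : j ∈ S.erase m then (spec j h).choose else j with hf
  have hmaps : ∀ j ∈ S.erase m, f j ∈ T := by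
    intro j hj
    have e : f j = (spec j hj).choose := dif_pos hj
    rw [e]
    exact Finset.mem_filter.mpr ⟨Finset.mem_univ _, ((spec j hj).choose_spec).2.1⟩
  have hinj : Set.InjOn f (S.erase m) := by
    intro j1 h1 j2 h2 heq
    simp only [Finset.coe_erase, Set.mem_diff, Finset.mem_coe] at h1 h2
    have h1' : j1 ∈ S.erase m := Finset.mem_erase.mpr ⟨by simpa using h1.2, h1.1⟩
    have h2' : j2 ∈ S.erase m := Finset.mem_erase.mpr ⟨by simpa using h2.2, h2.1⟩
    by_contra hne
    rcases lt_or_gt_of_ne hne with hlt | hlt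
    · have hs1 := (spec j1 h1').choose_spec
      have hs2 := (spec j2 h2').choose_spec
      have e1 : f j1 = (spec j1 h1').choose := dif_pos h1'
      have e2 : f j2 = (spec j2 h2').choose := dif_pos h2'
      have hlt2 : f j1 < j2 := by
        rw [e1]; exact hs1.2.2 j2 (Finset.mem_of_mem_erase h2') hlt
      have hlt3 : j2 < f j2 := by rw [e2]; exact hs2.1
      rw [heq] at hlt2; exact absurd (hlt2.trans hlt3) (lt_irrefl _)
    · have hs1 := (spec j1 h1').choose_spec
      have hs2 := (spec j2 h2').choose_spec
      have e1 : f j1 = (spec j1 h1').choose := dif_pos h1'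
      have e2 : f j2 = (spec j2 h2').choose := dif_pos h2'
      have hlt2 : f j2 < j1 := by
        rw [e2]; exact hs2.2.2 j1 (Finset.mem_of_mem_erase h1') hlt
      have hlt3 : j1 < f j1 := by rw [e1]; exact hs1.1
      rw [heq] at hlt3; exact absurd (hlt3.trans hlt2) (lt_irrefl _)
  have hcard : (S.erase m).card ≤ T.card :=
    Finset.card_le_card_of_injOn f hmaps hinj
  have : (S.erase m).card = S.card - 1 :=
    Finset.card_erase_of_mem (S.max'_mem hSne)
  omega

/-- Pairing bound from the proof of Theorem 5. -/
theorem stmt19 (n : ℕ) (hn : 2 ≤ n) (g : Fin (n + 1) → Grade)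
    (hCC : ∀ j k : Fin (n + 1), j < k → g j = Grade.C → g k = Grade.C →
      ∃ i : Fin (n + 1), j < i ∧ i < k ∧ g i = Grade.A)
    (pA pB pC : ℝ) (hpA : pA ∈ Set.Icc (0:ℝ) 1) (hpB : pB ∈ Set.Icc (0:ℝ) 1)
    (hpC : pC ∈ Set.Icc (0:ℝ) 1) :
    pA ^ (Finset.univ.filter (fun i => g i = Grade.A)).card
      * pB ^ (Finset.univ.filter (fun i => g i = Grade.B)).card
      * pC ^ (Finset.univ.filter (fun i => g i = Grade.C)).card
    ≤ (max (max (pA ^ 2) (pB ^ 2)) (pC * pA)) ^ ((n : ℝ) / 2 - 1) := by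
  classical
  obtain ⟨hpA0, hpA1⟩ := hpA
  obtain ⟨hpB0, hpB1⟩ := hpB
  obtain ⟨hpC0, hpC1⟩ := hpC
  set nA := (Finset.univ.filter (fun i => g i = Grade.A)).card with hnA
  set nB := (Finset.univ.filter (fun i => g i = Grade.B)).card with hnB
  set nC := (Finset.univ.filter (fun i => g i = Grade.C)).card with hnC
  set M := max (max (pA ^ 2) (pB ^ 2)) (pC * pA) with hM
  have hMA : pA ^ 2 ≤ M := le_trans (le_max_left _ _) (le_max_left _ _)
  have hMB : pB ^ 2 ≤ M := le_trans (le_max_right _ _) (le_max_left _ _)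
  have hMC : pC * pA ≤ M := le_max_right _ _
  have hM0 : 0 ≤ M := le_trans (sq_nonneg pA) hMA
  have hM1 : M ≤ 1 := by
    apply max_le (max_le ?_ ?_) ?_
    · calc pA ^ 2 ≤ 1 ^ 2 := pow_le_pow_left₀ hpA0 hpA1 2
        _ = 1 := one_pow 2
    · calc pB ^ 2 ≤ 1 ^ 2 := pow_le_pow_left₀ hpB0 hpB1 2
        _ = 1 := one_pow 2
    · calc pC * pA ≤ 1 * 1 := mul_le_mul hpC1 hpA1 hpA0 zero_le_one
        _ = 1 := one_mul 1
  -- sum of cards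
  have hsum : nA + nB + nC = n + 1 := by
    have : (nA + nB + nC : ℕ) = ∑ i : Fin (n+1),
        ((if g i = Grade.A then 1 else 0) + (if g i = Grade.B then 1 else 0)
          + (if g i = Grade.C then 1 else 0)) := by
      rw [hnA, hnB, hnC, Finset.card_filter, Finset.card_filter, Finset.card_filter,
        Finset.sum_add_distrib, Finset.sum_add_distrib]
    rw [this]
    have h2 : ∀ i : Fin (n+1),
        ((if g i = Grade.A then 1 else 0) + (if g i = Grade.B then 1 else 0)
          + (if g i = Grade.C then (1:ℕ) else 0)) = 1 := by
      intro i; cases g i <;> simp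
    simp only [h2, Finset.sum_const, Finset.card_univ, Fintype.card_fin, smul_eq_mul, mul_one]
  have hcomb : nC ≤ nA + 1 := aux_comb n g hCC
  -- existence of k
  have hkey : ∃ k : ℕ, n ≤ 2 * k + 1 ∧ pA ^ nA * pB ^ nB * pC ^ nC ≤ M ^ k := by
    by_cases hc : nC ≤ nA
    · refine ⟨nC + (nA - nC) / 2 + nB / 2, by omega, ?_⟩
      have hAsplit : nA = nC + (nA - nC) := by omega
      have step1 : pA ^ nA * pB ^ nB * pC ^ nC
          = (pA * pC) ^ nC * (pA ^ (nA - nC) * pB ^ nB) := by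
        have hsp : pA ^ nA = pA ^ nC * pA ^ (nA - nC) := by
          rw [← pow_add]; exact congrArg (pA ^ ·) (by omega)
        rw [hsp, mul_pow]; ring
      rw [step1, pow_add, pow_add]
      have b1 : (pA * pC) ^ nC ≤ M ^ nC := by
        apply pow_le_pow_left₀ (mul_nonneg hpA0 hpC0)
        rw [mul_comm]; exact hMC
      have b2 : pA ^ (nA - nC) ≤ M ^ ((nA - nC) / 2) :=
        aux_pow_half pA M hpA0 hpA1 hMA _
      have b3 : pB ^ nB ≤ M ^ (nB / 2) := aux_pow_half pB M hpB0 hpB1 hMB _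
      calc (pA * pC) ^ nC * (pA ^ (nA - nC) * pB ^ nB)
          ≤ M ^ nC * (M ^ ((nA - nC) / 2) * M ^ (nB / 2)) := by
            apply mul_le_mul b1 _ _ (pow_nonneg hM0 _)
            · exact mul_le_mul b2 b3 (pow_nonneg hpB0 _) (pow_nonneg hM0 _)
            · exact mul_nonneg (pow_nonneg hpA0 _) (pow_nonneg hpB0 _)
        _ = M ^ nC * M ^ ((nA - nC) / 2) * M ^ (nB / 2) := by ring
    · have hCeq : nC = nA + 1 := by omega
      refine ⟨nA + nB / 2, by omega, ?_⟩
      have step1 : pA ^ nA * pB ^ nB * pC ^ nC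
          = (pA * pC) ^ nA * pC * pB ^ nB := by
        rw [hCeq, mul_pow, pow_succ]; ring
      rw [step1, pow_add]
      have b1 : (pA * pC) ^ nA ≤ M ^ nA := by
        apply pow_le_pow_left₀ (mul_nonneg hpA0 hpC0)
        rw [mul_comm]; exact hMC
      have b3 : pB ^ nB ≤ M ^ (nB / 2) := aux_pow_half pB M hpB0 hpB1 hMB _
      calc (pA * pC) ^ nA * pC * pB ^ nB
          ≤ M ^ nA * 1 * M ^ (nB / 2) := by
            apply mul_le_mul _ b3 (pow_nonneg hpB0 _)
              (mul_nonneg (pow_nonneg hM0 _) zero_le_one)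
            exact mul_le_mul b1 hpC1 hpC0 (pow_nonneg hM0 _)
        _ = M ^ nA * M ^ (nB / 2) := by ring
  obtain ⟨k, hk, hle⟩ := hkey
  refine le_trans hle ?_
  -- M ^ k ≤ M ^ ((n:ℝ)/2 - 1)
  rcases eq_or_lt_of_le hM0 with hMz | hMpos
  · rcases eq_or_lt_of_le hn with h2 | h3
    · -- n = 2: exponent = 0
      have : ((n:ℝ)/2 - 1) = 0 := by rw [← h2]; norm_num
      rw [this, Real.rpow_zero]
      calc M ^ k ≤ 1 ^ k := pow_le_pow_left₀ hM0 hM1 k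
        _ = 1 := one_pow k
    · -- n ≥ 3: M = 0, k ≥ 1
      have hk1 : 1 ≤ k := by omega
      rw [← hMz, zero_pow (by omega : k ≠ 0)]
      exact Real.rpow_nonneg le_rfl _
  · rw [← Real.rpow_natCast M k]
    apply Real.rpow_le_rpow_of_exponent_ge hMpos hM1
    have : (n:ℝ) ≤ 2 * k + 1 := by exact_mod_cast hk
    linarith
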